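/- Let μ be a compactly supported measure of bounded variation on ℝᴺ and let U^μ₁(x) = ∫ dμ(z) / |x − z|^{N−1} be the Riesz potential of order 1 generated by μ. Then there is a positive constant c, depending only on N, such that for every τ > 0 the Lebesgue measure of the set {x ∈ ℝᴺ : |U^μ₁(x)| ≥ τ} is at most ( c ∫ |dμ| / τ )^{N/(N−1)}. -/

import Mathlib

open MeasureTheory Metric Filter Set

noncomputable section

/-- Euclidean space `ℝᴺ`. -/
abbrev Euc (N : ℕ) : Type := EuclideanSpace ℝ (Fin N)

variable {N : ℕ}

/-- `v` is of class `C¹` on the closure of `D` (the space `C¹(D̄)`). -/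
def C1OnClosure (D : Set (Euc N)) (v : Euc N → ℝ) : Prop :=
  ContDiffOn ℝ 1 v (closure D)

/-- Convergence in `L^t(D)` of a sequence of real valued functions. -/
def LtTendsto (D : Set (Euc N)) (t : ℝ) (u : ℕ → Euc N → ℝ) (v : Euc N → ℝ) : Prop :=
  Tendsto (fun n => ∫ x in D, |u n x - v x| ^ t) atTop (nhds 0)

/-- Convergence in `L^t(D)` of a sequence of vector valued functions. -/
def LtTendstoV (D : Set (Euc N)) (t : ℝ) (g : ℕ → Euc N → Euc N) (h : Euc N → Euc N) : Prop :=
  Tendsto (fun n => ∫ x in D, ‖g n x - h x‖ ^ t) atTop (nhds 0)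

/-- The pair `(v, g)` (a function together with its gradient) belongs to `H^{1,t}(D)`:
`v` is the limit, in the norm `‖·‖_{L^t(D)} + ‖∇·‖_{L^t(D)}`, of a sequence of `C¹(D̄)`
functions whose gradients converge to `g` in `L^t(D)`. -/
def MemH1 (D : Set (Euc N)) (t : ℝ) (v : Euc N → ℝ) (g : Euc N → Euc N) : Prop :=
  ∃ u : ℕ → Euc N → ℝ, (∀ n, C1OnClosure D (u n)) ∧
    LtTendsto D t u v ∧ LtTendstoV D t (fun n x => gradient (u n) x) g

/-- The pair `(v, g)` belongs to `H₀^{1,t}(D)`: limit of `C¹(D̄)` functions with compact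
support contained in `D`. -/
def MemH10 (D : Set (Euc N)) (t : ℝ) (v : Euc N → ℝ) (g : Euc N → Euc N) : Prop :=
  ∃ u : ℕ → Euc N → ℝ,
    (∀ n, C1OnClosure D (u n) ∧ IsCompact (tsupport (u n)) ∧ tsupport (u n) ⊆ D) ∧
    LtTendsto D t u v ∧ LtTendstoV D t (fun n x => gradient (u n) x) g

/-- `v ≥ m` on `E` in the `H^{1,t}(D)` sense. -/
def GeOnH (D : Set (Euc N)) (t : ℝ) (v : Euc N → ℝ) (g : Euc N → Euc N)
    (E : Set (Euc N)) (m : ℝ) : Prop :=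
  ∃ u : ℕ → Euc N → ℝ, (∀ n, C1OnClosure D (u n)) ∧ (∀ n, ∀ x ∈ E, m ≤ u n x) ∧
    LtTendsto D t u v ∧ LtTendstoV D t (fun n x => gradient (u n) x) g

/-- `v ≤ m` on `E` in the `H^{1,t}(D)` sense. -/
def LeOnH (D : Set (Euc N)) (t : ℝ) (v : Euc N → ℝ) (g : Euc N → Euc N)
    (E : Set (Euc N)) (m : ℝ) : Prop :=
  ∃ u : ℕ → Euc N → ℝ, (∀ n, C1OnClosure D (u n)) ∧ (∀ n, ∀ x ∈ E, u n x ≤ m) ∧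
    LtTendsto D t u v ∧ LtTendstoV D t (fun n x => gradient (u n) x) g

/-- `v = m` on `E` in the `H^{1,t}(D)` sense (simultaneously `≥ m` and `≤ m`). -/
def EqOnH (D : Set (Euc N)) (t : ℝ) (v : Euc N → ℝ) (g : Euc N → Euc N)
    (E : Set (Euc N)) (m : ℝ) : Prop :=
  GeOnH D t v g E m ∧ LeOnH D t v g E m

/-- `v` vanishes identically on `E` in the `H^{1,t}(D)` sense: a single approximating
sequence of `C¹(D̄)` functions vanishing on `E`. -/
def VanishOnH (D : Set (Euc N)) (t : ℝ) (v : Euc N → ℝ) (g : Euc N → Euc N)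
    (E : Set (Euc N)) : Prop :=
  ∃ u : ℕ → Euc N → ℝ, (∀ n, C1OnClosure D (u n)) ∧ (∀ n, ∀ x ∈ E, u n x = 0) ∧
    LtTendsto D t u v ∧ LtTendstoV D t (fun n x => gradient (u n) x) g

/-- The form `𝔞(v,ψ) = ∫_D A(∇v)·∇ψ dx`, expressed through the gradients `g = ∇v`,
`h = ∇ψ`. -/
def aForm (A : Euc N → Euc N) (D : Set (Euc N)) (g h : Euc N → Euc N) : ℝ :=
  ∫ x in D, (inner ℝ (A (g x)) (h x) : ℝ)

/-- `ψ ∈ C_c^∞(D)`. -/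
def TestFun (D : Set (Euc N)) (ψ : Euc N → ℝ) : Prop :=
  ContDiff ℝ (⊤ : ℕ∞) ψ ∧ HasCompactSupport ψ ∧ tsupport ψ ⊆ D

/-- The pair `(u, gu)` belongs to `H^{1,t}_loc(Ω)`. -/
def MemH1loc (Ω : Set (Euc N)) (t : ℝ) (u : Euc N → ℝ) (gu : Euc N → Euc N) : Prop :=
  ∀ Ω' : Set (Euc N), IsOpen Ω' → IsCompact (closure Ω') → closure Ω' ⊆ Ω →
    MemH1 Ω' t u gu

/-- `u` (with gradient `gu`) is a weak solution of `ℒu = div A(∇u) = 0` in `Ω`. -/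
def IsWeakSolution (A : Euc N → Euc N) (Ω : Set (Euc N)) (t : ℝ)
    (u : Euc N → ℝ) (gu : Euc N → Euc N) : Prop :=
  MemH1loc Ω t u gu ∧
    ∀ ψ : Euc N → ℝ, TestFun Ω ψ → aForm A Ω gu (fun x => gradient ψ x) = 0

/-- A function with gradient `gu` is a supersolution in `Ω` with respect to `ℒ`. -/
def IsSupersolution (A : Euc N → Euc N) (Ω : Set (Euc N)) (gu : Euc N → Euc N) : Prop :=
  ∀ ψ : Euc N → ℝ, TestFun Ω ψ → (∀ x, 0 ≤ ψ x) →
    0 ≤ aForm A Ω gu (fun x => gradient ψ x)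

/-- A function with gradient `gu` is a subsolution in `Ω` with respect to `ℒ`. -/
def IsSubsolution (A : Euc N → Euc N) (Ω : Set (Euc N)) (gu : Euc N → Euc N) : Prop :=
  ∀ ψ : Euc N → ℝ, TestFun Ω ψ → (∀ x, ψ x ≤ 0) →
    0 ≤ aForm A Ω gu (fun x => gradient ψ x)

/-- `u` (with gradient `gu`) is the variational solution with boundary data `φ`
(with gradient `gφ`): `u - φ ∈ H₀^{1,t}(Ω)` and `𝔞(u,v) = 0` for all `v ∈ H₀^{1,t}(Ω)`. -/
def IsVarSolution (A : Euc N → Euc N) (Ω : Set (Euc N)) (t : ℝ)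
    (φ : Euc N → ℝ) (gφ : Euc N → Euc N) (u : Euc N → ℝ) (gu : Euc N → Euc N) : Prop :=
  MemH1 Ω t u gu ∧ MemH10 Ω t (fun x => u x - φ x) (fun x => gu x - gφ x) ∧
    ∀ v gv, MemH10 Ω t v gv → aForm A Ω gu gv = 0

/-- `u` is the generalized solution in `Ω` with continuous boundary data `φ`: for every
sequence of `C¹(Ω̄)` data converging uniformly to `φ` on `∂Ω`, the corresponding
variational solutions converge uniformly on `Ω` to `u`. -/
def IsGenSolution (A : Euc N → Euc N) (Ω : Set (Euc N)) (t : ℝ)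
    (φ : Euc N → ℝ) (u : Euc N → ℝ) : Prop :=
  ∀ φseq : ℕ → Euc N → ℝ, (∀ n, C1OnClosure Ω (φseq n)) →
    TendstoUniformlyOn φseq φ atTop (frontier Ω) →
    ∀ (useq : ℕ → Euc N → ℝ) (gseq : ℕ → Euc N → Euc N),
      (∀ n, IsVarSolution A Ω t (φseq n) (fun x => gradient (φseq n) x) (useq n) (gseq n)) →
      TendstoUniformlyOn useq u atTop Ω

/-- The boundary point `y ∈ ∂Ω` is regular: for every continuous boundary data `φ`, the
generalized solution `u` satisfies `lim_{x ∈ Ω, x → y} u(x) = φ(y)`. -/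
def RegularPoint (A : Euc N → Euc N) (t : ℝ) (Ω : Set (Euc N)) (y : Euc N) : Prop :=
  ∀ φ : Euc N → ℝ, ContinuousOn φ (frontier Ω) →
    ∀ u : Euc N → ℝ, IsGenSolution A Ω t φ u →
      Tendsto u (nhdsWithin y Ω) (nhds (φ y))

/-- The `t`-capacitary potential of `E` relative to the value `m > 0` and the set `S`:
the solution of the obstacle problem on `K_m(S)`. -/
def IsCapPotUp (A : Euc N → Euc N) (S : Set (Euc N)) (t : ℝ) (E : Set (Euc N)) (m : ℝ)
    (u : Euc N → ℝ) (gu : Euc N → Euc N) : Prop :=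
  MemH10 S t u gu ∧ GeOnH S t u gu E m ∧
    ∀ v gv, MemH10 S t v gv → GeOnH S t v gv E m →
      0 ≤ aForm A S gu (fun x => gv x - gu x)

/-- The `t`-capacitary potential of `E` relative to the value `-m` and the set `S`:
the solution of the obstacle problem on `K_{-m}(S)`. -/
def IsCapPotDown (A : Euc N → Euc N) (S : Set (Euc N)) (t : ℝ) (E : Set (Euc N)) (m : ℝ)
    (u : Euc N → ℝ) (gu : Euc N → Euc N) : Prop :=
  MemH10 S t u gu ∧ LeOnH S t u gu E (-m) ∧
    ∀ v gv, MemH10 S t v gv → LeOnH S t v gv E (-m) →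
      0 ≤ aForm A S gu (fun x => gv x - gu x)

/-- The structural assumptions on the continuous map `A : ℝᴺ → ℝᴺ`. -/
structure OperatorHyp {N : ℕ} (A : Euc N → Euc N) (t a p₀ : ℝ) : Prop where
  cont : Continuous A
  zero : A 0 = 0
  mono : ∀ p q : Euc N, p ≠ q → 0 < (inner ℝ (A p - A q) (p - q) : ℝ)
  coercive : ∀ p : Euc N, p₀ ≤ ‖p‖ → a * ‖p‖ ^ t ≤ (inner ℝ (A p) p : ℝ)
  growth : ∀ p : Euc N, p₀ ≤ ‖p‖ → ‖A p‖ ≤ a⁻¹ * ‖p‖ ^ (t - 1)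

lemma euc_finrank (m : ℕ) : Module.finrank ℝ (Euc (m+2)) = m + 2 :=
  finrank_euclideanSpace_fin

instance euc_nontrivial (m : ℕ) : Nontrivial (Euc (m+2)) :=
  Module.nontrivial_of_finrank_pos (R := ℝ) (by rw [euc_finrank]; omega)

lemma aux_finite (m : ℕ) :
    ∫⁻ y in ball (0 : Euc (m+2)) 1, ENNReal.ofReal ((‖y‖ ^ (m+1))⁻¹) ∂volume < ⊤ := by
  set g0 : Euc (m+2) → ENNReal := fun y => ENNReal.ofReal ((‖y‖ ^ (m+1))⁻¹) with hg0
  set S : ℕ → Set (Euc (m+2)) := fun k =>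
    ball 0 ((2:ℝ)⁻¹ ^ k) \ ball 0 ((2:ℝ)⁻¹ ^ (k+1)) with hS
  have hcover : ball (0 : Euc (m+2)) 1 ⊆ {0} ∪ ⋃ k, S k := by
    intro x hx
    rcases eq_or_ne x 0 with rfl | hx0
    · exact Or.inl rfl
    right
    have hxpos : 0 < ‖x‖ := norm_pos_iff.mpr hx0
    have hxlt : ‖x‖ < 1 := mem_ball_zero_iff.mp hx
    have hex : ∃ k : ℕ, (2:ℝ)⁻¹ ^ k ≤ ‖x‖ := by
      obtain ⟨k, hk⟩ := exists_pow_lt_of_lt_one hxpos (by norm_num : (2:ℝ)⁻¹ < 1)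
      exact ⟨k, hk.le⟩
    classical
    let k0 := Nat.find hex
    have hk0 : (2:ℝ)⁻¹ ^ k0 ≤ ‖x‖ := Nat.find_spec hex
    have hk0ne : k0 ≠ 0 := by
      intro h
      rw [h] at hk0; simp at hk0; linarith
    refine mem_iUnion.mpr ⟨k0 - 1, ?_⟩
    constructor
    · rw [mem_ball_zero_iff]
      by_contra h
      push_neg at h
      exact Nat.find_min hex (Nat.sub_lt (Nat.pos_of_ne_zero hk0ne) one_pos) h
    · rw [mem_ball_zero_iff]
      push_neg
      rwa [Nat.sub_add_cancel (Nat.one_le_iff_ne_zero.mpr hk0ne)]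
  have h0 : ∫⁻ y in ({0} : Set (Euc (m+2))), g0 y ∂volume = 0 := by
    rw [lintegral_singleton]
    simp [hg0]
  have hSk : ∀ k, ∫⁻ y in S k, g0 y ∂volume ≤
      ENNReal.ofReal ((2:ℝ) ^ (m+1) * (2:ℝ)⁻¹ ^ k) * volume (ball (0 : Euc (m+2)) 1) := by
    intro k
    have hb : ∀ y ∈ S k, g0 y ≤ ENNReal.ofReal ((((2:ℝ)⁻¹ ^ (k+1)) ^ (m+1))⁻¹) := by
      intro y hy
      apply ENNReal.ofReal_le_ofReal
      have h1 : (2:ℝ)⁻¹ ^ (k+1) ≤ ‖y‖ := by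
        have := hy.2
        rw [mem_ball_zero_iff] at this
        push_neg at this
        exact this
      have h2 : (0:ℝ) < (2:ℝ)⁻¹ ^ (k+1) := by positivity
      exact inv_anti₀ (by positivity) (pow_le_pow_left₀ h2.le h1 _)
    have hmeas : MeasurableSet (S k) := (measurableSet_ball).diff measurableSet_ball
    calc ∫⁻ y in S k, g0 y ∂volume
        ≤ ∫⁻ _ in S k, ENNReal.ofReal ((((2:ℝ)⁻¹ ^ (k+1)) ^ (m+1))⁻¹) ∂volume :=
          setLIntegral_mono' hmeas hb
      _ = ENNReal.ofReal ((((2:ℝ)⁻¹ ^ (k+1)) ^ (m+1))⁻¹) * volume (S k) :=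
          setLIntegral_const _ _
      _ ≤ ENNReal.ofReal ((((2:ℝ)⁻¹ ^ (k+1)) ^ (m+1))⁻¹) * volume (ball (0:Euc (m+2)) ((2:ℝ)⁻¹ ^ k)) := by
          gcongr
          exact diff_subset
      _ = ENNReal.ofReal ((((2:ℝ)⁻¹ ^ (k+1)) ^ (m+1))⁻¹) *
            (ENNReal.ofReal (((2:ℝ)⁻¹ ^ k) ^ (m+2)) * volume (ball (0:Euc (m+2)) 1)) := by
          rw [Measure.addHaar_ball _ _ (by positivity), euc_finrank]
      _ = ENNReal.ofReal ((2:ℝ) ^ (m+1) * (2:ℝ)⁻¹ ^ k) * volume (ball (0 : Euc (m+2)) 1) := by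
          rw [← mul_assoc, ← ENNReal.ofReal_mul (by positivity)]
          congr 2
          field_simp
          rw [← pow_mul, ← pow_mul, ← pow_add, show (k+1)*(m+1)+k = k*(m+2) + (m+1) by ring, pow_add, mul_assoc, ← mul_pow]
          norm_num
  calc ∫⁻ y in ball (0:Euc (m+2)) 1, g0 y ∂volume
      ≤ ∫⁻ y in ({0} : Set (Euc (m+2))) ∪ ⋃ k, S k, g0 y ∂volume := lintegral_mono_set hcover
    _ ≤ (∫⁻ y in ({0} : Set (Euc (m+2))), g0 y ∂volume) + ∫⁻ y in ⋃ k, S k, g0 y ∂volume :=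
        lintegral_union_le _ _ _
    _ ≤ 0 + ∑' k, ∫⁻ y in S k, g0 y ∂volume := by
        rw [h0]; gcongr; exact lintegral_iUnion_le _ _
    _ ≤ ∑' k, ENNReal.ofReal ((2:ℝ) ^ (m+1) * (2:ℝ)⁻¹ ^ k) * volume (ball (0 : Euc (m+2)) 1) := by
        rw [zero_add]; exact ENNReal.tsum_le_tsum hSk
    _ < ⊤ := by
        have heq : ∀ k:ℕ, ENNReal.ofReal ((2:ℝ) ^ (m+1) * (2:ℝ)⁻¹ ^ k) * volume (ball (0 : Euc (m+2)) 1)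
            = (ENNReal.ofReal ((2:ℝ) ^ (m+1)) * volume (ball (0 : Euc (m+2)) 1)) * (ENNReal.ofReal (2:ℝ)⁻¹) ^ k := by
          intro k
          rw [ENNReal.ofReal_mul (by positivity),
            ENNReal.ofReal_pow (p := (2:ℝ)⁻¹) (by norm_num) k]
          ring
        rw [tsum_congr heq, ENNReal.tsum_mul_left, ENNReal.tsum_geometric]
        apply ENNReal.mul_lt_top (ENNReal.mul_lt_top ENNReal.ofReal_lt_top measure_ball_lt_top)
        refine ENNReal.inv_lt_top.mpr ?_
        exact tsub_pos_iff_lt.mpr (ENNReal.ofReal_lt_one.mpr (by norm_num))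

lemma aux_ball (m : ℕ) :
    ∃ c₀ : ℝ, 0 ≤ c₀ ∧ ∀ (z : Euc (m+2)) (r : ℝ), 0 < r →
      ∫⁻ x in ball z r, ENNReal.ofReal ((dist x z ^ (m+1))⁻¹) ∂volume ≤
        ENNReal.ofReal (c₀ * r) := by
  set C₀ := ∫⁻ y in ball (0 : Euc (m+2)) 1, ENNReal.ofReal ((‖y‖ ^ (m+1))⁻¹) ∂volume with hC₀
  refine ⟨C₀.toReal, ENNReal.toReal_nonneg, ?_⟩
  intro z r hr
  have hmeasf : Measurable fun y : Euc (m+2) => ENNReal.ofReal ((‖y‖ ^ (m+1))⁻¹) :=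
    ENNReal.measurable_ofReal.comp ((continuous_norm.pow _).measurable.inv)
  have htrans : ∫⁻ x in ball z r, ENNReal.ofReal ((dist x z ^ (m+1))⁻¹) ∂volume
      = ∫⁻ y in ball (0 : Euc (m+2)) r, ENNReal.ofReal ((‖y‖ ^ (m+1))⁻¹) ∂volume := by
    have hmp := (measurePreserving_add_right (volume : Measure (Euc (m+2))) z).map_eq
    have hmg : Measurable fun x : Euc (m+2) => ENNReal.ofReal ((‖x - z‖ ^ (m+1))⁻¹) :=
      ENNReal.measurable_ofReal.comp
        (((continuous_id.sub continuous_const).norm.pow _).measurable.inv)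
    calc ∫⁻ x in ball z r, ENNReal.ofReal ((dist x z ^ (m+1))⁻¹) ∂volume
        = ∫⁻ x in ball z r, ENNReal.ofReal ((‖x - z‖ ^ (m+1))⁻¹) ∂volume := by
          simp_rw [dist_eq_norm]
      _ = ∫⁻ x in ball z r, ENNReal.ofReal ((‖x - z‖ ^ (m+1))⁻¹)
            ∂(Measure.map (· + z) volume) := by rw [hmp]
      _ = ∫⁻ y in (· + z) ⁻¹' ball z r, ENNReal.ofReal ((‖y + z - z‖ ^ (m+1))⁻¹) ∂volume :=
          setLIntegral_map measurableSet_ball hmg (measurable_add_const z)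
      _ = ∫⁻ y in ball (0 : Euc (m+2)) r, ENNReal.ofReal ((‖y‖ ^ (m+1))⁻¹) ∂volume := by
          have hp : (· + z) ⁻¹' ball z r = ball (0 : Euc (m+2)) r := by
            ext y
            simp [mem_ball, dist_eq_norm]
          rw [hp]
          simp_rw [add_sub_cancel_right]
  have hC₀top : C₀ ≠ ⊤ := (aux_finite m).ne
  set a := ENNReal.ofReal (r ^ (m+2)) with ha
  have ha0 : a ≠ 0 := by
    simp only [ha, ne_eq, ENNReal.ofReal_eq_zero, not_le]
    positivity
  have hatop : a ≠ ⊤ := ENNReal.ofReal_ne_top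
  have hvol : (volume : Measure (Euc (m+2))) = a • Measure.map (r • ·) volume := by
    rw [Measure.map_addHaar_smul (volume : Measure (Euc (m+2))) (ne_of_gt hr), euc_finrank]
    rw [abs_of_pos (by positivity), ENNReal.ofReal_inv_of_pos (by positivity), ← ha]
    rw [smul_smul, ENNReal.mul_inv_cancel ha0 hatop, one_smul]
  have hscale : ∫⁻ y in ball (0 : Euc (m+2)) r, ENNReal.ofReal ((‖y‖ ^ (m+1))⁻¹) ∂volume
      = ENNReal.ofReal r * C₀ := by
    calc ∫⁻ y in ball (0 : Euc (m+2)) r, ENNReal.ofReal ((‖y‖ ^ (m+1))⁻¹) ∂volume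
        = ∫⁻ y in ball (0 : Euc (m+2)) r, ENNReal.ofReal ((‖y‖ ^ (m+1))⁻¹)
            ∂(a • Measure.map (r • ·) volume) := by rw [← hvol]
      _ = a * ∫⁻ y in ball (0 : Euc (m+2)) r, ENNReal.ofReal ((‖y‖ ^ (m+1))⁻¹)
            ∂(Measure.map (r • ·) volume) := by
          rw [Measure.restrict_smul, lintegral_smul_measure, smul_eq_mul]
      _ = a * ∫⁻ y in (r • ·) ⁻¹' ball (0 : Euc (m+2)) r,
            ENNReal.ofReal ((‖r • y‖ ^ (m+1))⁻¹) ∂volume := by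
          rw [setLIntegral_map measurableSet_ball hmeasf (measurable_const_smul r)]
      _ = a * ∫⁻ y in ball (0 : Euc (m+2)) 1,
            ENNReal.ofReal ((r ^ (m+1))⁻¹) * ENNReal.ofReal ((‖y‖ ^ (m+1))⁻¹) ∂volume := by
          have hp : (r • ·) ⁻¹' ball (0 : Euc (m+2)) r = ball (0 : Euc (m+2)) 1 := by
            ext y
            simp only [Set.mem_preimage, mem_ball_zero_iff, norm_smul, Real.norm_eq_abs,
              abs_of_pos hr]
            constructor
            · intro h
              nlinarith [norm_nonneg y]
            · intro h
              nlinarith [norm_nonneg y]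
          rw [hp]
          congr 1
          refine setLIntegral_congr_fun (measurableSet_ball : MeasurableSet (ball (0 : Euc (m+2)) 1)) (fun y _ => ?_)
          rw [norm_smul, Real.norm_eq_abs, abs_of_pos hr, mul_pow, mul_inv,
            ENNReal.ofReal_mul (by positivity)]
      _ = a * (ENNReal.ofReal ((r ^ (m+1))⁻¹) * C₀) := by
          rw [lintegral_const_mul _ hmeasf]
      _ = ENNReal.ofReal r * C₀ := by
          rw [← mul_assoc, ha, ← ENNReal.ofReal_mul (by positivity)]
          congr 2
          field_simp
          ring
  have hfin : ENNReal.ofReal (C₀.toReal * r) = C₀ * ENNReal.ofReal r := by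
    rw [ENNReal.ofReal_mul ENNReal.toReal_nonneg, ENNReal.ofReal_toReal hC₀top]
  rw [htrans, hscale, hfin, mul_comm]

/-- **Cartan-type estimate.** Let `μ` be a compactly supported signed measure of bounded
variation on `ℝᴺ` and `U^μ₁(x) = ∫ dμ(z)/|x-z|^{N-1}` its Riesz potential of order `1`.
Then there is `c > 0`, depending only on `N`, such that for every `τ > 0`,
`|{x : |U^μ₁(x)| ≥ τ}| ≤ (c ∫|dμ| / τ)^{N/(N-1)}`. -/
theorem riesz_potential_level_set_estimate
    {N : ℕ} (hN : 2 ≤ N) :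
    ∃ c : ℝ, 0 < c ∧
      ∀ μ : MeasureTheory.SignedMeasure (Euc N),
        (∃ K : Set (Euc N), IsCompact K ∧
          ∀ s : Set (Euc N), MeasurableSet s → Disjoint s K → μ s = 0) →
        ∀ τ : ℝ, 0 < τ →
          (volume {x : Euc N |
              τ ≤ |(∫ z, (dist x z ^ (N - 1))⁻¹ ∂μ.toJordanDecomposition.posPart) -
                    ∫ z, (dist x z ^ (N - 1))⁻¹ ∂μ.toJordanDecomposition.negPart|}).toReal
            ≤ (c * (μ.totalVariation Set.univ).toReal / τ) ^ ((N : ℝ) / (N - 1)) := by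
  obtain ⟨m, rfl⟩ : ∃ m, N = m + 2 := ⟨N - 2, by omega⟩
  obtain ⟨c₀, hc₀, hball⟩ := aux_ball m
  refine ⟨c₀ + 1, by linarith, ?_⟩
  intro μ _hK τ hτ
  haveI := μ.toJordanDecomposition.posPart_finite
  haveI := μ.toJordanDecomposition.negPart_finite
  set ν := μ.totalVariation with hν
  haveI hfinν : IsFiniteMeasure ν :=
    ⟨by
      rw [hν, MeasureTheory.SignedMeasure.totalVariation, Measure.add_apply]
      exact ENNReal.add_lt_top.mpr ⟨measure_lt_top _ _, measure_lt_top _ _⟩⟩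
  set M := (ν Set.univ).toReal with hM
  have hM0 : 0 ≤ M := ENNReal.toReal_nonneg
  have hRHS0 : (0:ℝ) ≤ (c₀ + 1) * M / τ := by positivity
  simp only [show m + 2 - 1 = m + 1 from rfl]
  set E := {x : Euc (m+2) |
      τ ≤ |(∫ z, (dist x z ^ (m+1))⁻¹ ∂μ.toJordanDecomposition.posPart) -
            ∫ z, (dist x z ^ (m+1))⁻¹ ∂μ.toJordanDecomposition.negPart|} with hE
  have hker : Measurable
      (Function.uncurry fun x z : Euc (m+2) => ENNReal.ofReal ((dist x z ^ (m+1))⁻¹)) := by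
    apply ENNReal.measurable_ofReal.comp
    exact (((continuous_fst.dist continuous_snd).pow _).measurable).inv
  set G : Euc (m+2) → ENNReal :=
    fun x => ∫⁻ z, ENNReal.ofReal ((dist x z ^ (m+1))⁻¹) ∂ν with hG
  have hGmeas : Measurable G := Measurable.lintegral_prod_right hker
  -- Step 1 : E is contained in the superlevel set of G
  have hEA : ∀ x : Euc (m+2), x ∈ E → ENNReal.ofReal τ ≤ G x := by
    intro x hx
    by_contra hcon
    push_neg at hcon
    have hfmeas : Measurable fun z : Euc (m+2) => (dist x z ^ (m+1))⁻¹ :=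
      ((continuous_const.dist continuous_id).pow _).measurable.inv
    set Lp := ∫⁻ z, ENNReal.ofReal ((dist x z ^ (m+1))⁻¹) ∂μ.toJordanDecomposition.posPart
      with hLp
    set Ln := ∫⁻ z, ENNReal.ofReal ((dist x z ^ (m+1))⁻¹) ∂μ.toJordanDecomposition.negPart
      with hLn
    have hGsplit : G x = Lp + Ln := by
      rw [hG]
      simp only [hν, MeasureTheory.SignedMeasure.totalVariation, lintegral_add_measure]
      rfl
    have hLpt : Lp < ⊤ := by
      refine lt_of_le_of_lt ?_ (hcon.trans_le le_top)
      rw [hGsplit]; exact le_add_right le_rfl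
    have hLnt : Ln < ⊤ := by
      refine lt_of_le_of_lt ?_ (hcon.trans_le le_top)
      rw [hGsplit]; exact le_add_left le_rfl
    have hintp : Integrable (fun z => (dist x z ^ (m+1))⁻¹) μ.toJordanDecomposition.posPart := by
      refine ⟨hfmeas.aestronglyMeasurable, ?_⟩
      rw [hasFiniteIntegral_iff_ofReal (Filter.Eventually.of_forall fun z => by positivity)]
      exact hLpt
    have hintn : Integrable (fun z => (dist x z ^ (m+1))⁻¹) μ.toJordanDecomposition.negPart := by
      refine ⟨hfmeas.aestronglyMeasurable, ?_⟩
      rw [hasFiniteIntegral_iff_ofReal (Filter.Eventually.of_forall fun z => by positivity)]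
      exact hLnt
    have hip : ∫ z, (dist x z ^ (m+1))⁻¹ ∂μ.toJordanDecomposition.posPart = Lp.toReal := by
      rw [integral_eq_lintegral_of_nonneg_ae (Filter.Eventually.of_forall fun z => by positivity)
        hfmeas.aestronglyMeasurable]
    have hin : ∫ z, (dist x z ^ (m+1))⁻¹ ∂μ.toJordanDecomposition.negPart = Ln.toReal := by
      rw [integral_eq_lintegral_of_nonneg_ae (Filter.Eventually.of_forall fun z => by positivity)
        hfmeas.aestronglyMeasurable]
    have hsum : Lp.toReal + Ln.toReal < τ := by
      rw [← ENNReal.toReal_add hLpt.ne hLnt.ne]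
      exact ENNReal.toReal_lt_of_lt_ofReal (hGsplit ▸ hcon)
    have hxE : τ ≤ |Lp.toReal - Ln.toReal| := by
      have := hx
      rw [hE, Set.mem_setOf_eq, hip, hin] at this
      exact this
    have h1 : |Lp.toReal - Ln.toReal| ≤ Lp.toReal + Ln.toReal := by
      have h2 : (0:ℝ) ≤ Lp.toReal := ENNReal.toReal_nonneg
      have h3 : (0:ℝ) ≤ Ln.toReal := ENNReal.toReal_nonneg
      rw [abs_le]
      constructor <;> nlinarith
    linarith
  -- trivial cases
  rcases eq_or_ne (volume E) ⊤ with hEtop | hEtop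
  · rw [hEtop]
    simp only [ENNReal.toReal_top]
    exact Real.rpow_nonneg hRHS0 _
  rcases eq_or_ne (volume E) 0 with hE0 | hE0
  · rw [hE0]
    simp only [ENNReal.toReal_zero]
    exact Real.rpow_nonneg hRHS0 _
  -- Step 2 : the good measurable set B
  set A := {x : Euc (m+2) | ENNReal.ofReal τ ≤ G x} with hA
  have hAmeas : MeasurableSet A := measurableSet_le measurable_const hGmeas
  set B := toMeasurable volume E ∩ A with hB
  have hBmeas : MeasurableSet B := (measurableSet_toMeasurable _ _).inter hAmeas
  have hEB : E ⊆ B := Set.subset_inter (subset_toMeasurable _ _) (fun x hx => hEA x hx)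
  have hBE : volume B = volume E := le_antisymm
    ((measure_mono Set.inter_subset_left).trans_eq (measure_toMeasurable E))
    (measure_mono hEB)
  have hVtop : volume B ≠ ⊤ := by rw [hBE]; exact hEtop
  set V := (volume B).toReal with hV
  have hV0 : 0 < V := ENNReal.toReal_pos (by rw [hBE]; exact hE0) hVtop
  set r := V ^ (((m:ℝ)+2)⁻¹) with hrdef
  have hr0 : 0 < r := Real.rpow_pos_of_pos hV0 _
  have hrN : r ^ (m+2) = V := by
    rw [hrdef, ← Real.rpow_natCast (V ^ (((m:ℝ)+2)⁻¹)) (m+2), ← Real.rpow_mul hV0.le]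
    rw [show (((m:ℝ)+2)⁻¹ * ((m+2:ℕ):ℝ)) = 1 by push_cast; field_simp]
    exact Real.rpow_one V
  -- Chebyshev
  have cheb : ENNReal.ofReal τ * volume B ≤ ∫⁻ x in B, G x ∂volume := by
    rw [← setLIntegral_const B (ENNReal.ofReal τ)]
    exact setLIntegral_mono' hBmeas fun x hx => hx.2
  -- Tonelli
  have swap : ∫⁻ x in B, G x ∂volume
      = ∫⁻ z, ∫⁻ x in B, ENNReal.ofReal ((dist x z ^ (m+1))⁻¹) ∂volume ∂ν :=
    lintegral_lintegral_swap hker.aemeasurable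
  -- kernel estimate
  have inner : ∀ z : Euc (m+2),
      ∫⁻ x in B, ENNReal.ofReal ((dist x z ^ (m+1))⁻¹) ∂volume
        ≤ ENNReal.ofReal ((c₀ + 1) * r) := by
    intro z
    have hsplit : B ⊆ (B ∩ ball z r) ∪ (B \ ball z r) := by
      intro x hx
      by_cases h : x ∈ ball z r
      · exact Or.inl ⟨hx, h⟩
      · exact Or.inr ⟨hx, h⟩
    calc ∫⁻ x in B, ENNReal.ofReal ((dist x z ^ (m+1))⁻¹) ∂volume
        ≤ ∫⁻ x in (B ∩ ball z r) ∪ (B \ ball z r),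
            ENNReal.ofReal ((dist x z ^ (m+1))⁻¹) ∂volume := lintegral_mono_set hsplit
      _ ≤ (∫⁻ x in B ∩ ball z r, ENNReal.ofReal ((dist x z ^ (m+1))⁻¹) ∂volume)
            + ∫⁻ x in B \ ball z r, ENNReal.ofReal ((dist x z ^ (m+1))⁻¹) ∂volume :=
          lintegral_union_le _ _ _
      _ ≤ ENNReal.ofReal (c₀ * r) + ENNReal.ofReal r := by
          refine add_le_add ?_ ?_
          · exact (lintegral_mono_set Set.inter_subset_right).trans (hball z r hr0)
          · have hbound : ∀ x ∈ B \ ball z r,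
                ENNReal.ofReal ((dist x z ^ (m+1))⁻¹) ≤ ENNReal.ofReal ((r ^ (m+1))⁻¹) := by
              intro x hx
              have hd : r ≤ dist x z := le_of_not_gt fun hlt => hx.2 (mem_ball.mpr hlt)
              exact ENNReal.ofReal_le_ofReal
                (inv_anti₀ (by positivity) (pow_le_pow_left₀ hr0.le hd _))
            calc ∫⁻ x in B \ ball z r, ENNReal.ofReal ((dist x z ^ (m+1))⁻¹) ∂volume
                ≤ ∫⁻ _ in B \ ball z r, ENNReal.ofReal ((r ^ (m+1))⁻¹) ∂volume :=
                  setLIntegral_mono' (hBmeas.diff measurableSet_ball) hbound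
              _ = ENNReal.ofReal ((r ^ (m+1))⁻¹) * volume (B \ ball z r) :=
                  setLIntegral_const _ _
              _ ≤ ENNReal.ofReal ((r ^ (m+1))⁻¹) * volume B := by
                  gcongr
                  exact Set.diff_subset
              _ = ENNReal.ofReal r := by
                  rw [← ENNReal.ofReal_toReal hVtop, ← hV, ← hrN,
                    ← ENNReal.ofReal_mul (by positivity)]
                  congr 1
                  field_simp
                  ring
      _ = ENNReal.ofReal ((c₀ + 1) * r) := by
          rw [← ENNReal.ofReal_add (by positivity) hr0.le]
          congr 1
          ring
  -- combine
  have key : ENNReal.ofReal τ * volume B ≤ ENNReal.ofReal ((c₀ + 1) * r) * ν Set.univ := by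
    refine cheb.trans ?_
    rw [swap]
    calc ∫⁻ z, ∫⁻ x in B, ENNReal.ofReal ((dist x z ^ (m+1))⁻¹) ∂volume ∂ν
        ≤ ∫⁻ _, ENNReal.ofReal ((c₀ + 1) * r) ∂ν := lintegral_mono inner
      _ = ENNReal.ofReal ((c₀ + 1) * r) * ν Set.univ := lintegral_const _
  have hreal : τ * V ≤ (c₀ + 1) * r * M := by
    refine (ENNReal.ofReal_le_ofReal_iff (by positivity)).mp ?_
    rw [ENNReal.ofReal_mul hτ.le, ENNReal.ofReal_mul (by positivity),
      hV, ENNReal.ofReal_toReal hVtop, hM, ENNReal.ofReal_toReal (measure_ne_top ν _)]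
    exact key
  have hr1 : r ^ (m+1) ≤ (c₀ + 1) * M / τ := by
    rw [le_div_iff₀ hτ]
    have h2 : (r ^ (m+1) * τ) * r ≤ ((c₀ + 1) * M) * r := by
      calc (r ^ (m+1) * τ) * r = τ * (r ^ (m+1) * r) := by ring
        _ = τ * V := by rw [← pow_succ, hrN]
        _ ≤ (c₀ + 1) * r * M := hreal
        _ = ((c₀ + 1) * M) * r := by ring
    exact le_of_mul_le_mul_right h2 hr0
  -- conclusion
  have hVE : (volume E).toReal = V := by rw [hV, hBE]
  rw [hVE]
  have hexp : ((m+2:ℕ):ℝ) / (((m+2:ℕ):ℝ) - 1) = ((m:ℝ)+2) / ((m:ℝ)+1) := by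
    push_cast
    ring_nf
  rw [hexp]
  have h3 : V = (r ^ (m+1) : ℝ) ^ (((m:ℝ)+2) / ((m:ℝ)+1)) := by
    rw [← Real.rpow_natCast r (m+1), ← Real.rpow_mul hr0.le,
      show ((m+1:ℕ):ℝ) * (((m:ℝ)+2) / ((m:ℝ)+1)) = ((m:ℝ)+2) by push_cast; field_simp,
      show ((m:ℝ)+2) = ((m+2:ℕ):ℝ) by push_cast; ring, Real.rpow_natCast, hrN]
  rw [h3]
  exact Real.rpow_le_rpow (by positivity) hr1 (by positivity)
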